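/- arXiv:1507.02128 — 5 statements merged into one kernel-verified Lean document; each statement's English description precedes it below -/
import Mathlib

section
/- Let Cyl : K → K be a functor on a category K with pushouts, admitting a right adjoint Path : K → K, equipped with natural transformations γ : Id ⊔ Id ⇒ Cyl and σ : Cyl ⇒ Id with σ ∘ γ the codiagonal. Fix an object i. Define Cyl_i : i↓K → i↓K on (e : i → X) as the pushout of Cyl(e) : Cyl(i) → Cyl(X) along σ_i : Cyl(i) → i, and define Path_i : i↓K → i↓K on (i → Y) as the composite i → Path(i) → Path(Y), where i → Path(i) is the adjoint transpose of σ_i. Then Cyl_i is left adjoint to Path_i. -/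
open CategoryTheory CategoryTheory.Limits

universe v u

variable {K : Type u} [Category.{v} K] [HasPushouts K]

/-- The induced cylinder `Cyl_i` on the coslice category `i↓K`: on an object `e : i ⟶ X`
it is the pushout of `Cyl(e) : Cyl(i) ⟶ Cyl(X)` along `σ_i : Cyl(i) ⟶ i`. -/
@[simps]
noncomputable def cylUnder (Cyl : K ⥤ K) (σ : Cyl ⟶ 𝟭 K) (i : K) : Under i ⥤ Under i where
  obj e := Under.mk (pushout.inl (σ.app i) (Cyl.map e.hom))
  map {e e'} m := Under.homMk
    (pushout.map (σ.app i) (Cyl.map e.hom) (σ.app i) (Cyl.map e'.hom)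
      (𝟙 i) (Cyl.map m.right) (𝟙 (Cyl.obj i))
      (by simp) (by simp [← Functor.map_comp, Under.w m]))
    (by exact (pushout.inl_desc _ _ _).trans (Category.id_comp _))
  map_id e := by
    apply CommaMorphism.ext
    · rfl
    · apply pushout.hom_ext <;> simp
  map_comp {e e' e''} m m' := by
    apply CommaMorphism.ext
    · rfl
    · simp only [Under.comp_right, Under.homMk_right]
      rw [pushout.map_comp]
      congr 1 <;> simp

/-- The induced path functor `Path_i` on the coslice category `i↓K`: on an object
`i ⟶ Y` it is the composite `i ⟶ Path(i) ⟶ Path(Y)` where `i ⟶ Path(i)` is the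
adjoint transpose of `σ_i`. -/
@[simps]
def pathUnder (Cyl Path : K ⥤ K) (adj : Cyl ⊣ Path) (σ : Cyl ⟶ 𝟭 K) (i : K) :
    Under i ⥤ Under i where
  obj y := Under.mk ((adj.homEquiv i i (σ.app i)) ≫ Path.map y.hom)
  map {y y'} m := Under.homMk (Path.map m.right)
    (by simp [← Functor.map_comp, Under.w m])

/-!
`Cyl_i` factors as `Under.post Cyl : i↓K ⥤ Cyl(i)↓K` followed by pushout along `σ_i`, and
`Path_i` as restriction along `σ_i`, then `Under.post Path`, then restriction along the unit
`η_i : i ⟶ Path (Cyl i)`, because `η_i ≫ Path (σ_i ≫ y) = adj.homEquiv σ_i ≫ Path y`.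
The factors are adjoint in pairs (`Under.postAdjunctionLeft`, `Under.mapPushoutAdj`), hence so
are the composites.
-/

namespace CategoryTheory.Limits

lemma pushout.map_id_comp_pushoutSymmetry_hom {C : Type*} [Category C] [HasPushouts C]
    {X Y Z Z' : C} (f : X ⟶ Y) (g : X ⟶ Z) (g' : X ⟶ Z') (h : Z ⟶ Z') (w : g ≫ h = g') :
    pushout.map f g f g' (𝟙 Y) h (𝟙 X) (by simp) (by simp [w]) ≫ (pushoutSymmetry f g').hom =
      (pushoutSymmetry f g).hom ≫
        pushout.desc (h ≫ pushout.inl g' f) (pushout.inr g' f)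
          (by rw [← Category.assoc, w, pushout.condition]) := by
  subst w
  -- `pushoutSymmetry` reaches `pushout g f` via `hasPushout_symmetry`, so `simp` misses `desc` lemmas
  apply pushout.hom_ext
  · simp only [inl_comp_pushoutSymmetry_hom_assoc]
    erw [pushout.inr_desc, pushout.inl_desc_assoc]
    simp
  · simp only [inr_comp_pushoutSymmetry_hom_assoc]
    erw [pushout.inl_desc, pushout.inr_desc_assoc]
    simp

end CategoryTheory.Limits

noncomputable def cylUnderIsoPostCompPushout (Cyl : K ⥤ K) (σ : Cyl ⟶ 𝟭 K) (i : K) :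
    cylUnder Cyl σ i ≅ Under.post Cyl ⋙ Under.pushout (σ.app i) :=
  NatIso.ofComponents
    (fun e => Under.isoMk (pushoutSymmetry _ _) (inl_comp_pushoutSymmetry_hom _ _))
    (fun m => Under.UnderMorphism.ext <|
      pushout.map_id_comp_pushoutSymmetry_hom _ _ _ _ (by simp [← Functor.map_comp]))

def pathUnderIsoMapCompPostCompMap (Cyl Path : K ⥤ K) (adj : Cyl ⊣ Path) (σ : Cyl ⟶ 𝟭 K)
    (i : K) :
    pathUnder Cyl Path adj σ i ≅
      Under.map (σ.app i) ⋙ Under.post Path ⋙ Under.map (adj.unit.app i) :=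
  NatIso.ofComponents
    (fun y => Under.isoMk (Iso.refl (Path.obj y.right))
      (show (adj.homEquiv i i (σ.app i) ≫ Path.map y.hom) ≫ 𝟙 _ =
          adj.unit.app i ≫ Path.map (σ.app i ≫ y.hom) by
        simp [Adjunction.homEquiv_unit]))
    (fun m => Under.UnderMorphism.ext <| (Category.comp_id _).trans (Category.id_comp _).symm)

noncomputable def cylUnderAdjunction (Cyl Path : K ⥤ K) (adj : Cyl ⊣ Path) (σ : Cyl ⟶ 𝟭 K)
    (i : K) : cylUnder Cyl σ i ⊣ pathUnder Cyl Path adj σ i :=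
  (((Under.postAdjunctionLeft adj).comp (Under.mapPushoutAdj (σ.app i))).ofNatIsoLeft
    (cylUnderIsoPostCompPushout Cyl σ i).symm).ofNatIsoRight
    (pathUnderIsoMapCompPostCompMap Cyl Path adj σ i).symm

theorem cylUnder_adj_pathUnder_general
    (Cyl Path : K ⥤ K) (adj : Cyl ⊣ Path) (σ : Cyl ⟶ 𝟭 K) (i : K) :
    Nonempty (cylUnder Cyl σ i ⊣ pathUnder Cyl Path adj σ i) :=
  ⟨cylUnderAdjunction Cyl Path adj σ i⟩

/-- `Cyl_i` is left adjoint to `Path_i`. -/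
theorem cylUnder_adj_pathUnder [HasBinaryCoproducts K]
    (Cyl Path : K ⥤ K) (adj : Cyl ⊣ Path) (σ : Cyl ⟶ 𝟭 K)
    (γ : ∀ X : K, X ⨿ X ⟶ Cyl.obj X)
    (γ_natural : ∀ {X Y : K} (f : X ⟶ Y), coprod.map f f ≫ γ Y = γ X ≫ Cyl.map f)
    (hσγ : ∀ X : K, γ X ≫ σ.app X = codiag X) (i : K) :
    Nonempty (cylUnder Cyl σ i ⊣ pathUnder Cyl Path adj σ i) :=
  cylUnder_adj_pathUnder_general Cyl Path adj σ i
end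

section
/- Let Cyl : K → K be a cylinder functor on a category K with pushouts and finite coproducts, with natural transformations γ : Id ⊔ Id ⇒ Cyl and σ : Cyl ⇒ Id such that σγ is the codiagonal. Let i be an object such that γ_i : i ⊔ i → Cyl(i) is an epimorphism. Then for every object (e : i → X) of i↓K, the underlying object of Cyl_i(i → X) (defined as the pushout of Cyl(e) along σ_i) is also the pushout of the composite i ⊔ i → X ⊔ X → Cyl(X) along the codiagonal i ⊔ i → i. -/
open CategoryTheory CategoryTheory.Limits

universe v u

/-!
Precomposing both legs of a span with an epimorphism does not change its pushout: a cocone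
`b, c` under `h ≫ f, h ≫ g` satisfies `h ≫ f ≫ b = h ≫ g ≫ c`, and cancelling the epi `h`
makes it a cocone under `f, g`. Apply this with `h = γ_i`, which turns `σ_i` into the
codiagonal (by `σγ = ∇`) and `Cyl(e)` into `γ_X ∘ (e ⊔ e)` (by naturality of `γ`).
-/

theorem IsPushout.of_epi_comp {C : Type*} [Category C] {W X Y Z : C}
    {f : X ⟶ Y} {g : X ⟶ Z} [HasPushout f g] (h : W ⟶ X) [Epi h] {f' : W ⟶ Y} {g' : W ⟶ Z}
    (hf : h ≫ f = f') (hg : h ≫ g = g') :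
    IsPushout f' g' (pushout.inl f g) (pushout.inr f g) := by
  subst hf hg
  exact IsPushout.of_isColimit (pushoutIsPushoutOfEpiComp f g h)

/-- If `γ_i : i ⨿ i ⟶ Cyl(i)` is an epimorphism, then for every `e : i ⟶ X` the pushout
of `Cyl(e)` along `σ_i` (the underlying object of `Cyl_i(i ⟶ X)`) is also the pushout of
the composite `i ⨿ i ⟶ X ⨿ X ⟶ Cyl(X)` along the codiagonal `i ⨿ i ⟶ i`. -/
theorem cylUnder_pushout_of_epi
    {K : Type u} [Category.{v} K] [HasPushouts K] [HasBinaryCoproducts K]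
    (Cyl : K ⥤ K) (σ : Cyl ⟶ 𝟭 K)
    (γ : ∀ X : K, X ⨿ X ⟶ Cyl.obj X)
    (γ_natural : ∀ {X Y : K} (f : X ⟶ Y), coprod.map f f ≫ γ Y = γ X ≫ Cyl.map f)
    (hσγ : ∀ X : K, γ X ≫ σ.app X = codiag X)
    (i : K) (hepi : Epi (γ i)) {X : K} (e : i ⟶ X) :
    ∃ φ : pushout (σ.app i) (Cyl.map e) ≅ pushout (codiag i) (coprod.map e e ≫ γ X),
      pushout.inl (σ.app i) (Cyl.map e) ≫ φ.hom
          = pushout.inl (codiag i) (coprod.map e e ≫ γ X) ∧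
      pushout.inr (σ.app i) (Cyl.map e) ≫ φ.hom
          = pushout.inr (codiag i) (coprod.map e e ≫ γ X) := by
  have hP := IsPushout.of_epi_comp (γ i) (hσγ i) (γ_natural e).symm
  exact ⟨hP.isoPushout, hP.inl_isoPushout_hom, hP.inr_isoPushout_hom⟩
end

section
/- The full subcategory of star-shaped weak transition systems is a coreflective subcategory of the coslice category {ι}↓WTS: for every object ({ι} → X), the restriction C_ι(X) of X to its ι-reachable states (with all actions and with the transitions whose initial state is reachable from ι) is a star-shaped weak transition system, and every map from a star-shaped weak transition system ({ι} → Y) to ({ι} → X) in the coslice category factors uniquely through the inclusion C_ι(X) → X. -/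
/-- A weak transition system over a set `Lbl` of labels. -/
structure WTS (Lbl : Type*) where
  /-- states -/
  S : Type*
  /-- actions -/
  L : Type*
  /-- labelling map -/
  μ : L → Lbl
  /-- the transitions, labelled by nonempty lists of actions -/
  T : S → List L → S → Prop
  nonempty_label : ∀ {α l β}, T α l β → l ≠ []
  /-- Multiset axiom -/
  multiset : ∀ {α l l' β}, T α l β → l.Perm l' → T α l' β
  /-- Patching axiom -/
  patching : ∀ {α β ν₁ ν₂ : S} {l₁ l₂ l₃ : List L}, l₁ ≠ [] → l₂ ≠ [] → l₃ ≠ [] →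
    T α (l₁ ++ l₂ ++ l₃) β → T α l₁ ν₁ → T ν₁ (l₂ ++ l₃) β →
    T α (l₁ ++ l₂) ν₂ → T ν₂ l₃ β → T ν₁ l₂ ν₂

/-- Reachability of a state from a state `ι`. -/
def WTS.reachable {Lbl : Type*} (X : WTS Lbl) (ι α : X.S) : Prop :=
  Relation.ReflTransGen (fun a b => ∃ l, X.T a l b) ι α

/-- A morphism of weak transition systems. -/
structure WTSHom {Lbl : Type*} (Y X : WTS Lbl) where
  /-- map on states -/
  fs : Y.S → X.S
  /-- map on actions -/
  fa : Y.L → X.L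
  label : ∀ a, X.μ (fa a) = Y.μ a
  map_T : ∀ {α l β}, Y.T α l β → X.T (fs α) (l.map fa) (fs β)

/-- Composition of morphisms of weak transition systems, `f.comp g` being "`g` then `f`". -/
def WTSHom.comp {Lbl : Type*} {Z Y X : WTS Lbl} (f : WTSHom Y X) (g : WTSHom Z Y) :
    WTSHom Z X where
  fs := f.fs ∘ g.fs
  fa := f.fa ∘ g.fa
  label a := by simp [f.label, g.label]
  map_T h := by simpa [List.map_map] using f.map_T (g.map_T h)

/-- A pointed weak transition system `(X, ι)` is star-shaped when every state is
reachable from `ι`. -/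
def StarShaped {Lbl : Type*} (X : WTS Lbl) (x : X.S) : Prop := ∀ s, X.reachable x s

/-- `C_ι(X)`: the restriction of `X` to its `ι`-reachable states, with all the actions
of `X` and the transitions of `X` whose initial state is reachable from `ι`. -/
def WTS.restrictReachable {Lbl : Type*} (X : WTS Lbl) (x : X.S) : WTS Lbl where
  S := {s : X.S // X.reachable x s}
  L := X.L
  μ := X.μ
  T a l b := X.T a.1 l b.1
  nonempty_label h := X.nonempty_label h
  multiset h p := X.multiset h p
  patching h1 h2 h3 t t1 t2 t3 t4 := X.patching h1 h2 h3 t t1 t2 t3 t4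

/-- The canonical state of `C_ι(X)` corresponding to `ι`. -/
def WTS.restrictReachablePoint {Lbl : Type*} (X : WTS Lbl) (x : X.S) :
    (X.restrictReachable x).S := ⟨x, Relation.ReflTransGen.refl⟩

/-- The inclusion `C_ι(X) → X`. -/
def WTS.restrictReachableIncl {Lbl : Type*} (X : WTS Lbl) (x : X.S) :
    WTSHom (X.restrictReachable x) X where
  fs := Subtype.val
  fa := id
  label _ := rfl
  map_T h := by erw [List.map_id]; exact h

/-! Morphisms preserve reachability, so a base-point preserving map out of a star-shaped system
lands in `C_ι(X)`; the factorisation is unique because the inclusion `C_ι(X) → X` is injective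
on states and the identity on actions. -/

theorem WTSHom.reachable_map {Lbl : Type*} {Y X : WTS Lbl} (f : WTSHom Y X) {a b : Y.S}
    (h : Y.reachable a b) : X.reachable (f.fs a) (f.fs b) :=
  h.lift f.fs fun _ _ ⟨l, hl⟩ => ⟨l.map f.fa, f.map_T hl⟩

theorem WTS.starShaped_restrictReachable {Lbl : Type*} (X : WTS Lbl) (x : X.S) :
    StarShaped (X.restrictReachable x) (X.restrictReachablePoint x) := by
  rintro ⟨s, hs⟩
  induction hs with
  | refl => exact .refl
  | tail _ hstep ih => exact ih.tail hstep

def WTSHom.codRestrictReachable {Lbl : Type*} {Y X : WTS Lbl} (f : WTSHom Y X) (x : X.S)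
    (hf : ∀ y, X.reachable x (f.fs y)) : WTSHom Y (X.restrictReachable x) where
  fs y := ⟨f.fs y, hf y⟩
  fa := f.fa
  label := f.label
  map_T := f.map_T

theorem WTS.restrictReachableIncl_comp_injective {Lbl : Type*} (X : WTS Lbl) (x : X.S)
    {Y : WTS Lbl} : Function.Injective fun g : WTSHom Y (X.restrictReachable x) =>
      (X.restrictReachableIncl x).comp g := by
  rintro ⟨gs, ga, _, _⟩ ⟨gs', ga', _, _⟩ h
  injection h with hs ha
  obtain rfl : gs = gs' := funext fun y => Subtype.ext (congrFun hs y)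
  obtain rfl : ga = ga' := ha
  rfl

/-- Star-shaped weak transition systems form a coreflective subcategory of the coslice
category `{ι}↓WTS`: `C_ι(X)` is star-shaped, and every map from a star-shaped pointed
weak transition system `(Y, yι)` to `(X, xι)` preserving the base points factors
uniquely through the inclusion `C_ι(X) → X` by a base-point preserving map. -/
theorem starShaped_coreflective {Lbl : Type*} (X : WTS Lbl) (xι : X.S) :
    StarShaped (X.restrictReachable xι) (X.restrictReachablePoint xι) ∧
    ∀ (Y : WTS Lbl) (yι : Y.S), StarShaped Y yι →
      ∀ f : WTSHom Y X, f.fs yι = xι →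
        ∃! g : WTSHom Y (X.restrictReachable xι),
          g.fs yι = X.restrictReachablePoint xι ∧
          (X.restrictReachableIncl xι).comp g = f := by
  refine ⟨X.starShaped_restrictReachable xι, fun Y yι hY f hf => ?_⟩
  have hreach : ∀ y, X.reachable xι (f.fs y) := fun y => hf ▸ f.reachable_map (hY y)
  refine ⟨f.codRestrictReachable xι hreach, ⟨Subtype.ext hf, rfl⟩, fun g ⟨_, hg⟩ => ?_⟩
  exact X.restrictReachableIncl_comp_injective xι hg
end

section
/- Let Cyl ⊣ Path be an adjunction of endofunctors of a category K with pushouts, σ : Cyl ⇒ Id a natural transformation, and i an object. Suppose σ is objectwise a retraction admitting compatible data so that for each X, the pushout map p_X : Cyl(X) → Cyl_i(X) (underlying object of the induced coslice cylinder) is a split epimorphism with section s_X. If every map σ_X : Cyl(X) → X has the right lifting property in K with respect to all maps i ⊔ A → i ⊔ B induced by a class I of maps A → B, then the induced map σ^i_X : Cyl_i(X) → X (in the coslice) has the right lifting property with respect to the images ρ^i(f) for f ∈ I. -/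
open CategoryTheory CategoryTheory.Limits

universe v u

/-! `σ_X` factors as `p_X ≫ σ^i_X`, so the section `s_X` exhibits `σ^i_X` as a retract of `σ_X`
in the arrow category, and right lifting properties pass to retracts. A lift in `K` of a square
in `i↓K` whose left side is a map under `i` is automatically a map under `i`. -/

namespace CategoryTheory

variable {C : Type u} [Category.{v} C]

def RetractArrow.ofSection {X Y Y' : C} {p : Y ⟶ Y'} {g : Y ⟶ X} {g' : Y' ⟶ X}
    (s : Y' ⟶ Y) (hs : s ≫ p = 𝟙 Y') (hg : p ≫ g' = g) : RetractArrow g' g where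
  i := Arrow.homMk s (𝟙 X) (by simp [← hg, reassoc_of% hs])
  r := Arrow.homMk p (𝟙 X) (by simp [hg])
  retract := by ext <;> simp [hs]

lemma HasLiftingProperty.under {S : C} {A B X Y : Under S} (j : A ⟶ B) (q : X ⟶ Y)
    (h : HasLiftingProperty j.right q.right) : HasLiftingProperty j q where
  sq_hasLift {u v} sq :=
    have sq' : CommSq u.right j.right q.right v.right :=
      ⟨by simpa using congrArg CommaMorphism.right sq.w⟩
    ⟨⟨{ l := Under.homMk sq'.lift (by rw [← Under.w j, Category.assoc, sq'.fac_left, Under.w u])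
        fac_left := by ext; exact sq'.fac_left
        fac_right := by ext; exact sq'.fac_right }⟩⟩

end CategoryTheory

/-- If each `p_X : Cyl(X) ⟶ Cyl_i(X)` is a split epimorphism and every `σ_X` has the
right lifting property with respect to the maps `i ⨿ A ⟶ i ⨿ B` induced by a class `I`,
then the induced map `σ^i_X : Cyl_i(X) ⟶ X` in the coslice category `i↓K` has the right
lifting property with respect to the maps `ρ^i(f)` for `f ∈ I`. -/
theorem coslice_cylinder_rlp
    {K : Type u} [Category.{v} K] [HasPushouts K] [HasBinaryCoproducts K]
    (Cyl : K ⥤ K) (σ : Cyl ⟶ 𝟭 K) (i : K)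
    (I : MorphismProperty K)
    (hsec : ∀ e : Under i, ∃ s : pushout (σ.app i) (Cyl.map e.hom) ⟶ Cyl.obj e.right,
      s ≫ pushout.inr (σ.app i) (Cyl.map e.hom) = 𝟙 _)
    (hrlp : ∀ (X : K) {A B : K} (f : A ⟶ B), I f →
      HasLiftingProperty (coprod.map (𝟙 i) f) (σ.app X)) :
    ∀ (e : Under i) {A B : K} (f : A ⟶ B), I f →
      HasLiftingProperty
        (Under.homMk (coprod.map (𝟙 i) f) (by simp) :
          Under.mk (coprod.inl : i ⟶ i ⨿ A) ⟶ Under.mk (coprod.inl : i ⟶ i ⨿ B))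
        (Under.homMk
            (pushout.desc e.hom (σ.app e.right) (by simpa using (σ.naturality e.hom).symm))
            (by exact pushout.inl_desc _ _ _) :
          Under.mk (pushout.inl (σ.app i) (Cyl.map e.hom)) ⟶ e) := by
  intro e A B f hf
  obtain ⟨s, hs⟩ := hsec e
  have := hrlp e.right f hf
  exact HasLiftingProperty.under _ _
    ((RetractArrow.ofSection s hs (pushout.inr_desc _ _ _)).rightLiftingProperty
      (coprod.map (𝟙 i) f))
end

section
/- Let K be a category, A a full reflective subcategory with reflection κ : K → A and unit η : Id ⇒ κ. Let Cyl be an endofunctor of K with natural transformations γ, σ as in a cylinder, and suppose: (i) for every object X of A, the unit map η_{Cyl(X)} : Cyl(X) → κ(Cyl(X)) admits a section s_X (i.e., η_{Cyl(X)} ∘ s_X = id); (ii) for every f : A → B in a class I of maps with source and target in A and every X in A, every commutative square from f to σ_X : Cyl(X) → X admits a diagonal lift. Then for every X in A, every commutative square from f ∈ I to κ(σ_X) : κ(Cyl(X)) → κ(X) ≅ X admits a diagonal lift. -/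
open CategoryTheory

universe v u

/-- Key lifting argument for reflective subcategories: let `R` be the reflection (composed
with the inclusion), with unit `η` invertible on the full subcategory `A`. If the unit
map `η_{Cyl(X)}` admits a section for every `X` in `A`, and every commutative square from
`f` (a map of `A`) to `σ_X : Cyl(X) ⟶ X` admits a diagonal lift for `X` in `A`, then
every commutative square from `f` to `κ(σ_X) : κ(Cyl(X)) ⟶ κ(X)` admits a diagonal lift. -/
theorem reflective_very_good_lifting
    {K : Type u} [Category.{v} K]
    (R : K ⥤ K) (η : 𝟭 K ⟶ R) (A : K → Prop)
    (hη : ∀ X : K, A X → IsIso (η.app X))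
    (Cyl : K ⥤ K) (σ : Cyl ⟶ 𝟭 K)
    {A₀ B₀ : K} (f : A₀ ⟶ B₀) (hA₀ : A A₀) (hB₀ : A B₀)
    (hsec : ∀ X : K, A X →
      ∃ s : R.obj (Cyl.obj X) ⟶ Cyl.obj X, s ≫ η.app (Cyl.obj X) = 𝟙 _)
    (hlift : ∀ X : K, A X → HasLiftingProperty f (σ.app X)) :
    ∀ X : K, A X → HasLiftingProperty f (R.map (σ.app X)) := by
  intro X hX
  obtain ⟨s, hs⟩ := hsec X hX
  have hηX := hη X hX
  have hl := hlift X hX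
  constructor
  intro u v sq
  have hnat : σ.app X ≫ η.app X = η.app (Cyl.obj X) ≫ R.map (σ.app X) := by
    simpa using (η.naturality (σ.app X))
  have hkey : s ≫ σ.app X = R.map (σ.app X) ≫ inv (η.app X) := by
    rw [← cancel_mono (η.app X)]
    simp [hnat, reassoc_of% hs]
  have sq' : CommSq (u ≫ s) f (σ.app X) (v ≫ inv (η.app X)) := by
    constructor
    rw [Category.assoc, hkey, ← Category.assoc, sq.w, Category.assoc]
  obtain ⟨⟨l⟩⟩ := hl.sq_hasLift sq'
  refine ⟨⟨⟨l.l ≫ η.app (Cyl.obj X), ?_, ?_⟩⟩⟩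
  · rw [← Category.assoc, l.fac_left, Category.assoc, hs, Category.comp_id]
  · rw [Category.assoc, ← hnat, ← Category.assoc, l.fac_right, Category.assoc,
      IsIso.inv_hom_id, Category.comp_id]
end
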